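/- For any graph G=(V,E) and set X ⊆ V, a set S is a minimum power dominating set of G subject to X (i.e., a minimum-cardinality power dominating set of G containing X) if and only if S is a minimum power dominating set of ℓ₃(G,X), the graph obtained from G by attaching three new leaf vertices to each vertex of X. -/
import Mathlib


namespace RPD

variable {V : Type*}

/-- The closed neighborhood of a set of vertices. -/
def closedNbhd (G : SimpleGraph V) (S : Set V) : Set V :=
  S ∪ {v | ∃ u ∈ S, G.Adj u v}

/-- The zero forcing closure: `ZFC G B v` means `v` eventually gets colored when
starting from the blue set `B` and repeatedly applying the color change rule
(a colored vertex with exactly one uncolored neighbor colors that neighbor). -/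
inductive ZFC (G : SimpleGraph V) (B : Set V) : V → Prop
  | init (v : V) (hv : v ∈ B) : ZFC G B v
  | force (u w : V) (hu : ZFC G B u) (hadj : G.Adj u w)
      (hothers : ∀ x, G.Adj u x → x ≠ w → ZFC G B x) : ZFC G B w

/-- `B` is a zero forcing set of `G`. -/
def IsZFS (G : SimpleGraph V) (B : Set V) : Prop := ∀ v, ZFC G B v

/-- `S` is a power dominating set of `G`: its closed neighborhood is a zero forcing set. -/
def IsPDS (G : SimpleGraph V) (S : Set V) : Prop := IsZFS G (closedNbhd G S)

/-- The restricted zero forcing number `Z(G;X)`; `Z(G) = zNum G ∅`. -/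
noncomputable def zNum (G : SimpleGraph V) (X : Set V) : ℕ :=
  sInf {n | ∃ B : Set V, X ⊆ B ∧ IsZFS G B ∧ B.ncard = n}

/-- The restricted power domination number `γ_P(G;X)`; `γ_P(G) = pdNum G ∅`. -/
noncomputable def pdNum (G : SimpleGraph V) (X : Set V) : ℕ :=
  sInf {n | ∃ S : Set V, X ⊆ S ∧ IsPDS G S ∧ S.ncard = n}

/-- A leaf is a vertex of degree one, i.e. whose neighbor set is a singleton. -/
def IsLeaf (G : SimpleGraph V) (l : V) : Prop := ∃ u, G.neighborSet l = {u}

end RPD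

open RPD

/-- `leafExt G X r` is the graph `ℓ_r(G,X)` obtained from `G` by attaching `r` new
pendant (leaf) vertices to each vertex of `X`. -/
def leafExt {V : Type*} (G : SimpleGraph V) (X : Set V) (r : ℕ) :
    SimpleGraph (V ⊕ (X × Fin r)) :=
  SimpleGraph.fromRel (fun a b =>
    match a, b with
    | Sum.inl u, Sum.inl v => G.Adj u v
    | Sum.inl u, Sum.inr p => u = (p.1 : V)
    | Sum.inr _, _ => False)


section Adj
variable {V : Type*} {G : SimpleGraph V} {X : Set V} {r : ℕ}

lemma adj_inl_inl {u v : V} :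
    (leafExt G X r).Adj (Sum.inl u) (Sum.inl v) ↔ G.Adj u v := by
  simp [leafExt, SimpleGraph.fromRel_adj]
  constructor
  · rintro ⟨h, h1 | h1⟩ <;> [exact h1; exact h1.symm]
  · intro h; exact ⟨by rintro rfl; exact G.irrefl h, Or.inl h⟩

lemma adj_inl_inr {u : V} {p : X × Fin r} :
    (leafExt G X r).Adj (Sum.inl u) (Sum.inr p) ↔ u = (p.1 : V) := by
  simp [leafExt, SimpleGraph.fromRel_adj]

lemma adj_inr {p : X × Fin r} {w : V ⊕ (X × Fin r)} :
    (leafExt G X r).Adj (Sum.inr p) w ↔ w = Sum.inl (p.1 : V) := by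
  cases w with
  | inl v =>
    simp only [leafExt, SimpleGraph.fromRel_adj]
    aesop
  | inr q =>
    simp [leafExt, SimpleGraph.fromRel_adj]

end Adj

section Main

variable {V : Type*} {G : SimpleGraph V} {X : Set V}

lemma zfc_mono {B B' : Set V} (h : B ⊆ B') {v : V} (hv : ZFC G B v) :
    ZFC G B' v := by
  induction hv with
  | init v hv => exact ZFC.init v (h hv)
  | force u w hu hadj hothers ihu ihothers =>
    exact ZFC.force u w ihu hadj (fun x hx hne => ihothers x hx hne)

lemma mem_closedNbhd_inl {S : Set V} {v : V} :
    Sum.inl v ∈ closedNbhd (leafExt G X 3) (Sum.inl '' S) ↔ v ∈ closedNbhd G S := by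
  constructor
  · rintro (⟨u, hu, h⟩ | ⟨u, ⟨s, hs, rfl⟩, hadj⟩)
    · exact Or.inl (Sum.inl.inj h ▸ hu)
    · exact Or.inr ⟨s, hs, adj_inl_inl.mp hadj⟩
  · rintro (hv | ⟨u, hu, hadj⟩)
    · exact Or.inl ⟨v, hv, rfl⟩
    · exact Or.inr ⟨Sum.inl u, ⟨u, hu, rfl⟩, adj_inl_inl.mpr hadj⟩

lemma mem_closedNbhd_inr {S : Set V} {p : X × Fin 3} (hp : (p.1 : V) ∈ S) :
    Sum.inr p ∈ closedNbhd (leafExt G X 3) (Sum.inl '' S) :=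
  Or.inr ⟨Sum.inl (p.1 : V), ⟨_, hp, rfl⟩, (adj_inr (G := G)).mpr rfl |>.symm⟩

/-- Forcing transfers from `G` to the leaf extension, given all leaves colored. -/
lemma zfc_to_ext {S : Set V} (hXS : X ⊆ S) {v : V}
    (hv : ZFC G (closedNbhd G S) v) :
    ZFC (leafExt G X 3) (closedNbhd (leafExt G X 3) (Sum.inl '' S)) (Sum.inl v) := by
  induction hv with
  | init v hv => exact ZFC.init _ (mem_closedNbhd_inl.mpr hv)
  | force u w hu hadj hothers ihu ihothers =>
    refine ZFC.force (Sum.inl u) (Sum.inl w) ihu (adj_inl_inl.mpr hadj) ?_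
    rintro (x | p) hx hne
    · exact ihothers x (adj_inl_inl.mp hx) (fun h => hne (by rw [h]))
    · exact ZFC.init _ (mem_closedNbhd_inr (hXS (adj_inl_inr.mp hx ▸ p.1.2)))

/-- Forcing transfers from the leaf extension back to `G`. -/
lemma zfc_of_ext {S : Set V} (hXS : X ⊆ S) {w : V ⊕ (X × Fin 3)}
    (hw : ZFC (leafExt G X 3) (closedNbhd (leafExt G X 3) (Sum.inl '' S)) w) :
    ∀ v : V, w = Sum.inl v → ZFC G (closedNbhd G S) v := by
  induction hw with
  | init w hw =>
    rintro v rfl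
    exact ZFC.init v (mem_closedNbhd_inl.mp hw)
  | force u w hu hadj hothers ihu ihothers =>
    rintro v rfl
    cases u with
    | inr p =>
      have : (Sum.inl v : V ⊕ (X × Fin 3)) = Sum.inl (p.1 : V) := adj_inr.mp hadj
      have hv : v ∈ S := hXS (Sum.inl.inj this ▸ p.1.2)
      exact ZFC.init v (Or.inl hv)
    | inl u' =>
      refine ZFC.force u' v (ihu u' rfl) (adj_inl_inl.mp hadj.symm |>.symm) ?_
      intro x hx hne
      exact ihothers (Sum.inl x) (adj_inl_inl.mpr hx)
        (fun h => hne (Sum.inl.inj h)) x rfl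

lemma isPDS_ext_iff {S : Set V} (hXS : X ⊆ S) :
    IsPDS G S ↔ IsPDS (leafExt G X 3) (Sum.inl '' S) := by
  constructor
  · intro h
    rintro (v | p)
    · exact zfc_to_ext hXS (h v)
    · exact ZFC.init _ (mem_closedNbhd_inr (hXS p.1.2))
  · intro h v
    exact zfc_of_ext hXS (h (Sum.inl v)) v rfl

/-- If no leaf of `x` is initially colored, none ever gets colored. -/
lemma leaf_not_forced {B : Set (V ⊕ (X × Fin 3))} {x : V} (hx : x ∈ X)
    (hB : ∀ i : Fin 3, Sum.inr (⟨x, hx⟩, i) ∉ B) {w : V ⊕ (X × Fin 3)}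
    (hw : ZFC (leafExt G X 3) B w) : ∀ i : Fin 3, w ≠ Sum.inr (⟨x, hx⟩, i) := by
  induction hw with
  | init w hw =>
    rintro i rfl
    exact hB i hw
  | force u w hu hadj hothers ihu ihothers =>
    rintro i rfl
    have hu' : u = Sum.inl x := by
      have := (adj_inr (p := (⟨x, hx⟩, i))).mp hadj.symm
      exact this
    set j : Fin 3 := if i = 0 then 1 else 0 with hj
    have hji : j ≠ i := by
      by_cases h0 : i = 0 <;> simp [hj, h0]
      exact fun h => h0 h.symm
    have hadjj : (leafExt G X 3).Adj u (Sum.inr (⟨x, hx⟩, j)) := by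
      rw [hu']; exact ((adj_inr (p := ((⟨x, hx⟩ : X), j))).mpr rfl).symm
    have hne : (Sum.inr ((⟨x, hx⟩ : X), j) : V ⊕ (X × Fin 3)) ≠ Sum.inr (⟨x, hx⟩, i) := by
      simp [hji]
    exact ihothers _ hadjj hne j rfl

end Main

section Main2

variable {V : Type*} {G : SimpleGraph V} {X : Set V}

/-- Projection sending leaves back to their support vertex. -/
def leafProj (X : Set V) : (V ⊕ (X × Fin 3)) → V := Sum.elim id (fun p => (p.1 : V))

lemma X_subset_proj {T : Set (V ⊕ (X × Fin 3))} (hT : IsPDS (leafExt G X 3) T) :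
    X ⊆ leafProj X '' T := by
  intro x hx
  by_contra hxS
  have hB : ∀ i : Fin 3, Sum.inr ((⟨x, hx⟩ : X), i) ∉ closedNbhd (leafExt G X 3) T := by
    rintro i (hmem | ⟨u, hu, hadj⟩)
    · exact hxS ⟨_, hmem, rfl⟩
    · have : u = Sum.inl x := (adj_inr (p := ((⟨x, hx⟩ : X), i))).mp hadj.symm
      exact hxS ⟨u, hu, by rw [this]; rfl⟩
  exact leaf_not_forced hx hB (hT (Sum.inr (⟨x, hx⟩, 0))) 0 rfl

lemma pds_proj {T : Set (V ⊕ (X × Fin 3))} (hT : IsPDS (leafExt G X 3) T) :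
    IsPDS G (leafProj X '' T) := by
  set S' := leafProj X '' T with hS'
  have hsub : closedNbhd (leafExt G X 3) T ⊆
      closedNbhd (leafExt G X 3) (Sum.inl '' S') := by
    rintro w (hw | ⟨t, ht, hadj⟩)
    · cases w with
      | inl v => exact Or.inl ⟨v, ⟨_, hw, rfl⟩, rfl⟩
      | inr p => exact mem_closedNbhd_inr ⟨_, hw, rfl⟩
    · cases t with
      | inl v => exact Or.inr ⟨Sum.inl v, ⟨v, ⟨_, ht, rfl⟩, rfl⟩, hadj⟩
      | inr p =>
        have : w = Sum.inl (p.1 : V) := adj_inr.mp hadj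
        exact this ▸ Or.inl ⟨_, ⟨_, ht, rfl⟩, rfl⟩
  have hext : IsPDS (leafExt G X 3) (Sum.inl '' S') :=
    fun v => zfc_mono hsub (hT v)
  exact (isPDS_ext_iff (X_subset_proj hT)).mpr hext

lemma isPDS_univ : IsPDS G (Set.univ : Set V) :=
  fun v => ZFC.init v (Or.inl trivial)

lemma pdNum_ext [Finite V] : pdNum (leafExt G X 3) (∅ : Set (V ⊕ (X × Fin 3))) = pdNum G X := by
  have hne1 : {n | ∃ S : Set V, X ⊆ S ∧ IsPDS G S ∧ S.ncard = n}.Nonempty :=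
    ⟨_, Set.univ, Set.subset_univ _, isPDS_univ, rfl⟩
  have hne2 : {n | ∃ T : Set (V ⊕ (X × Fin 3)), (∅ : Set (V ⊕ (X × Fin 3))) ⊆ T ∧
      IsPDS (leafExt G X 3) T ∧ T.ncard = n}.Nonempty :=
    ⟨_, Set.univ, Set.empty_subset _, isPDS_univ, rfl⟩
  apply le_antisymm
  · obtain ⟨S₀, hXS₀, hPDS₀, hcard₀⟩ := Nat.sInf_mem hne1
    exact Nat.sInf_le ⟨Sum.inl '' S₀, Set.empty_subset _, (isPDS_ext_iff hXS₀).mp hPDS₀,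
      by rw [Set.ncard_image_of_injective _ Sum.inl_injective]; exact hcard₀⟩
  · obtain ⟨T, _, hPDST, hcardT⟩ := Nat.sInf_mem hne2
    calc pdNum G X ≤ (leafProj X '' T).ncard :=
          Nat.sInf_le ⟨_, X_subset_proj hPDST, pds_proj hPDST, rfl⟩
      _ ≤ T.ncard := Set.ncard_image_le T.toFinite
      _ = _ := hcardT

end Main2


theorem stmt9 {V : Type*} [Finite V] (G : SimpleGraph V) (X : Set V) (S : Set V) :
    (X ⊆ S ∧ IsPDS G S ∧ S.ncard = pdNum G X) ↔
      (IsPDS (leafExt G X 3) ((Sum.inl '' S : Set (V ⊕ (X × Fin 3)))) ∧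
        ((Sum.inl '' S : Set (V ⊕ (X × Fin 3)))).ncard = pdNum (leafExt G X 3) ∅) := by
  constructor
  · rintro ⟨hXS, hPDS, hcard⟩
    refine ⟨(isPDS_ext_iff hXS).mp hPDS, ?_⟩
    rw [Set.ncard_image_of_injective _ Sum.inl_injective, hcard, pdNum_ext]
  · rintro ⟨hPDS', hcard'⟩
    have himg : leafProj X '' (Sum.inl '' S : Set (V ⊕ (X × Fin 3))) = S := by
      rw [Set.image_image]; simp [leafProj]
    have hXS : X ⊆ S := himg ▸ X_subset_proj hPDS'
    refine ⟨hXS, (isPDS_ext_iff hXS).mpr hPDS', ?_⟩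
    rw [← Set.ncard_image_of_injective S Sum.inl_injective, hcard', pdNum_ext]
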